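/- Let γ > 1, let s_U > 0 and s_D > 0, and let R_U, R_D ∈ ℝ with R_U + R_D > 0. Then there exists a unique pair (p, u_n) ∈ ℝ² with p > 0 such that a_U(p) − ((γ−1)/2)·u_n = R_U and a_D(p) + ((γ−1)/2)·u_n = R_D, where for X ∈ {U, D} the sound speed is a_X(p) = √(γ · s_X^{1/γ} · p^{(γ−1)/γ}) (equivalently a_X(p) = √(γ p / ρ_X) with ρ_X = (p/s_X)^{1/γ}). That is, the nonlinear algebraic system formed by the contact-discontinuity jump relations (equal pressure on both sides, common normal velocity u_n = ω on both sides) together with the prescribed Riemann variables R_U = a_U − ((γ−1)/2)u_n, R_D = a_D + ((γ−1)/2)u_n and the prescribed entropies s_U = p/ρ_U^γ, s_D = p/ρ_D^γ admits exactly one solution with positive pressure. -/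
import Mathlib


/-- The nonlinear algebraic system formed by the contact-discontinuity jump
relations (equal pressure, common normal velocity) together with the prescribed
Riemann variables `R_U = a_U − ((γ−1)/2)u_n`, `R_D = a_D + ((γ−1)/2)u_n` and the
prescribed entropies `s_U`, `s_D` admits exactly one solution `(p, u_n)` with
positive pressure, where `a_X(p) = √(γ · s_X^(1/γ) · p^((γ−1)/γ))`. -/
theorem stmt_9 (γ : ℝ) (hγ : 1 < γ) (sU sD RU RD : ℝ)
    (hsU : 0 < sU) (hsD : 0 < sD) (hR : 0 < RU + RD) :
    ∃! q : ℝ × ℝ, 0 < q.1 ∧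
      Real.sqrt (γ * sU ^ (1 / γ) * q.1 ^ ((γ - 1) / γ)) - (γ - 1) / 2 * q.2 = RU ∧
      Real.sqrt (γ * sD ^ (1 / γ) * q.1 ^ ((γ - 1) / γ)) + (γ - 1) / 2 * q.2 = RD := by
  have hγ0 : (0:ℝ) < γ := by linarith
  set c : ℝ := (γ - 1) / (2 * γ) with hc
  have hcpos : 0 < c := div_pos (by linarith) (by linarith)
  set A : ℝ := Real.sqrt (γ * sU ^ (1 / γ)) with hAdef
  set B : ℝ := Real.sqrt (γ * sD ^ (1 / γ)) with hBdef
  have hA : 0 < A := Real.sqrt_pos.mpr (by positivity)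
  have hB : 0 < B := Real.sqrt_pos.mpr (by positivity)
  have hABne : A + B ≠ 0 := by positivity
  have key : ∀ p : ℝ, 0 < p → ∀ s : ℝ, 0 < s →
      Real.sqrt (γ * s ^ (1 / γ) * p ^ ((γ - 1) / γ))
        = Real.sqrt (γ * s ^ (1 / γ)) * p ^ c := by
    intro p hp s hs
    rw [Real.sqrt_mul (by positivity), Real.sqrt_eq_rpow (p ^ ((γ - 1) / γ)), ← Real.rpow_mul hp.le]
    congr 1
    rw [hc]; field_simp
  set p₀ : ℝ := ((RU + RD) / (A + B)) ^ (1 / c) with hp₀def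
  have hbase : 0 < (RU + RD) / (A + B) := div_pos hR (by positivity)
  have hp₀ : 0 < p₀ := Real.rpow_pos_of_pos hbase _
  have hp₀c : p₀ ^ c = (RU + RD) / (A + B) := by
    rw [hp₀def, ← Real.rpow_mul hbase.le, one_div_mul_cancel hcpos.ne', Real.rpow_one]
  have hsum₀ : A * p₀ ^ c + B * p₀ ^ c = RU + RD := by
    rw [hp₀c]; field_simp
  set u₀ : ℝ := (RD - B * p₀ ^ c) / ((γ - 1) / 2) with hu₀def
  have hk : (γ - 1) / 2 ≠ 0 := ne_of_gt (by linarith)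
  have hku₀ : (γ - 1) / 2 * u₀ = RD - B * p₀ ^ c := by
    rw [hu₀def, mul_div_cancel₀ _ hk]
  refine ⟨(p₀, u₀), ⟨hp₀, ?_, ?_⟩, ?_⟩
  · rw [key p₀ hp₀ sU hsU, ← hAdef]
    simp only []
    linarith
  · rw [key p₀ hp₀ sD hsD, ← hBdef]
    simp only []
    linarith
  · rintro ⟨p, u⟩ ⟨hp, h1, h2⟩
    simp only [] at h1 h2
    rw [key p hp sU hsU, ← hAdef] at h1
    rw [key p hp sD hsD, ← hBdef] at h2
    have hsum : (A + B) * p ^ c = RU + RD := by ring_nf; ring_nf at h1 h2; linarith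
    have hpc : p ^ c = p₀ ^ c := by
      rw [hp₀c]
      field_simp at hsum ⊢
      linarith
    have hpeq : p = p₀ := by
      have e1 : (p ^ c) ^ (1/c) = p := by
        rw [← Real.rpow_mul hp.le, mul_one_div_cancel hcpos.ne', Real.rpow_one]
      have e2 : (p₀ ^ c) ^ (1/c) = p₀ := by
        rw [← Real.rpow_mul hp₀.le, mul_one_div_cancel hcpos.ne', Real.rpow_one]
      rw [← e1, hpc, e2]
    have hueq : u = u₀ := by
      rw [hu₀def, ← hpeq, eq_div_iff hk]
      linarith
    exact Prod.ext hpeq hueq
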